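/- arXiv:2203.14678 — 3 statements merged into one kernel-verified Lean document; each statement's English description precedes it below -/
import Mathlib

section
/- If L and N are positive integers with L dividing N, then the index of Γ_0(N) ∩ Γ_1(L) in SL_2(ℤ) equals N · φ(L) · Π_{p | N} (1 + 1/p), where φ is Euler's totient function and the product runs over primes p dividing N. -/
/-!
Reduction modulo `N` maps `SL(2, ℤ)` onto `SL(2, ℤ/N)`, because a coprime pair modulo `N` lifts to
a coprime pair of integers, and `Γ₀(N) ∩ Γ₁(L)` is the preimage of the group `H` of upper
triangular matrices whose diagonal entries are `1` modulo `L`. So the index is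
`|SL(2, ℤ/N)| / |H|`. The bottom row identifies `SL(2, R)` with (coprime pairs in `R`) × `R`;
the coprime pairs of `ℤ/N` are counted by the Chinese remainder theorem and, in the local ring
`ℤ/p^k`, as the pairs with a unit entry, `p^(2k) - p^(2k-2)` of them. Finally `|H| = N φ(N) / φ(L)`,
since the diagonal of an element of `H` is a unit in the kernel of `(ℤ/N)ˣ → (ℤ/L)ˣ`.
-/

open CongruenceSubgroup Matrix MatrixGroups

section Coprime

variable {R S : Type*} [CommRing R] [CommRing S]

lemma Prod.isCoprime_iff {a b : R × S} :
    IsCoprime a b ↔ IsCoprime a.1 b.1 ∧ IsCoprime a.2 b.2 := by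
  refine ⟨fun h => ⟨h.map (RingHom.fst R S), h.map (RingHom.snd R S)⟩, ?_⟩
  rintro ⟨⟨x₁, y₁, h₁⟩, ⟨x₂, y₂, h₂⟩⟩
  exact ⟨(x₁, x₂), (y₁, y₂), Prod.ext h₁ h₂⟩

lemma IsLocalRing.isCoprime_iff [IsLocalRing R] {a b : R} :
    IsCoprime a b ↔ IsUnit a ∨ IsUnit b := by
  refine ⟨fun ⟨x, y, h⟩ => ?_, ?_⟩
  · rcases IsLocalRing.isUnit_or_isUnit_of_isUnit_add (h ▸ isUnit_one : IsUnit (x * a + y * b))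
      with hx | hy
    · exact .inl (isUnit_of_mul_isUnit_right hx)
    · exact .inr (isUnit_of_mul_isUnit_right hy)
  · rintro (ha | hb)
    · exact ⟨↑ha.unit⁻¹, 0, by simp⟩
    · exact ⟨0, ↑hb.unit⁻¹, by simp⟩

end Coprime

lemma nonunits_eq_compl_range_val (R : Type*) [Monoid R] :
    nonunits R = (Set.range ((↑) : Rˣ → R))ᶜ := by
  ext; simp [mem_nonunits_iff, IsUnit]

def coprimePairs (R : Type*) [CommRing R] : Set (R × R) := {p | IsCoprime p.1 p.2}

section CoprimePairs

variable {R S : Type*} [CommRing R] [CommRing S]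

lemma mem_coprimePairs {p : R × R} : p ∈ coprimePairs R ↔ IsCoprime p.1 p.2 := Iff.rfl

lemma card_coprimePairs_congr (e : R ≃+* S) :
    Nat.card (coprimePairs R) = Nat.card (coprimePairs S) :=
  Nat.card_congr <| (e.toEquiv.prodCongr e.toEquiv).subtypeEquiv fun _ =>
    ⟨fun h => h.map e.toRingHom, fun h => by simpa [mem_coprimePairs] using h.map e.symm.toRingHom⟩

lemma card_coprimePairs_prod :
    Nat.card (coprimePairs (R × S)) = Nat.card (coprimePairs R) * Nat.card (coprimePairs S) := by
  rw [← Nat.card_prod]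
  exact Nat.card_congr <| ((Equiv.prodProdProdComm R S R S).subtypeEquiv fun _ =>
    Prod.isCoprime_iff).trans Equiv.subtypeProdEquivProd

lemma coprimePairs_eq_compl [IsLocalRing R] :
    coprimePairs R = (nonunits R ×ˢ nonunits R)ᶜ := by
  ext p
  simp [mem_coprimePairs, IsLocalRing.isCoprime_iff, mem_nonunits_iff, or_iff_not_and_not]

lemma card_coprimePairs_of_isLocalRing [IsLocalRing R] [Finite R] :
    Nat.card (coprimePairs R) = Nat.card R ^ 2 - Nat.card (nonunits R) ^ 2 := by
  rw [Nat.card_coe_set_eq, coprimePairs_eq_compl, Set.ncard_compl, Set.ncard_prod,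
    ← Nat.card_coe_set_eq, Nat.card_prod, sq, sq]

end CoprimePairs

namespace Matrix.SpecialLinearGroup

variable {R S : Type*} [CommRing R] [CommRing S]

lemma eq_transvection_of_row_one_eq (C : SL(2, R)) (h₀ : C 1 0 = 0) (h₁ : C 1 1 = 1) :
    C = transvection zero_ne_one (C 0 1) := by
  have hdet := C.det_coe
  rw [det_fin_two, h₀, h₁, mul_one, mul_zero, sub_zero] at hdet
  ext i j
  fin_cases i <;> fin_cases j <;> simp [transvection_coe, hdet, h₀, h₁]

lemma mul_inv_eq_transvection_of_row_one_eq {A B : SL(2, R)} (h₀ : A 1 0 = B 1 0)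
    (h₁ : A 1 1 = B 1 1) : A * B⁻¹ = transvection zero_ne_one ((A * B⁻¹) 0 1) := by
  have hB := B.det_coe
  rw [det_fin_two] at hB
  apply eq_transvection_of_row_one_eq <;>
    simp only [coe_mul, coe_inv, adjugate_fin_two, Matrix.mul_apply, Fin.sum_univ_two, h₀, h₁]
  · simp [mul_comm]
  · simpa [mul_comm, add_comm, ← sub_eq_neg_add] using hB

lemma transvection_mul_apply_one (b : R) (A : SL(2, R)) (j : Fin 2) :
    (transvection zero_ne_one b * A : SL(2, R)) 1 j = A 1 j := by
  simp [transvection_coe, Matrix.add_mul]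

noncomputable def completeBottomRow (p : coprimePairs R) : SL(2, R) :=
  (IsCoprime.exists_SL2_row p.2 1).choose

lemma completeBottomRow_apply_one_zero (p : coprimePairs R) :
    completeBottomRow p 1 0 = p.1.1 :=
  (IsCoprime.exists_SL2_row p.2 1).choose_spec.1

lemma completeBottomRow_apply_one_one (p : coprimePairs R) :
    completeBottomRow p 1 1 = p.1.2 :=
  (IsCoprime.exists_SL2_row p.2 1).choose_spec.2

def bottomRow (A : SL(2, R)) : coprimePairs R := ⟨(A 1 0, A 1 1), A.isCoprime_row 1⟩

variable (R) in
noncomputable def SL2EquivCoprimePairsProd : SL(2, R) ≃ coprimePairs R × R where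
  toFun A := (bottomRow A, (A * (completeBottomRow (bottomRow A))⁻¹) 0 1)
  invFun p := transvection zero_ne_one p.2 * completeBottomRow p.1
  left_inv A := by
    simp only
    rw [← mul_inv_eq_transvection_of_row_one_eq, inv_mul_cancel_right]
    · exact (completeBottomRow_apply_one_zero (bottomRow A)).symm
    · exact (completeBottomRow_apply_one_one (bottomRow A)).symm
  right_inv := by
    rintro ⟨p, b⟩
    have hrow : bottomRow (transvection zero_ne_one b * completeBottomRow p) = p := by
      ext <;> simp [bottomRow, transvection_mul_apply_one,
        completeBottomRow_apply_one_zero, completeBottomRow_apply_one_one]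
    ext1
    · exact hrow
    · simp [hrow, transvection_coe]

variable (R) in
lemma card_SL2 : Nat.card SL(2, R) = Nat.card (coprimePairs R) * Nat.card R := by
  rw [Nat.card_congr (SL2EquivCoprimePairsProd R), Nat.card_prod]

def upperTriangularKer (f : R →+* S) : Subgroup SL(2, R) where
  carrier := {A | A 1 0 = 0 ∧ f (A 0 0) = 1 ∧ f (A 1 1) = 1}
  one_mem' := by simp
  mul_mem' := by
    rintro A B ⟨hA₁₀, hA₀₀, hA₁₁⟩ ⟨hB₁₀, hB₀₀, hB₁₁⟩
    simp [Matrix.mul_apply, Fin.sum_univ_two, hA₁₀, hB₁₀, hA₀₀, hA₁₁, hB₀₀, hB₁₁]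
  inv_mem' := by
    rintro A ⟨h₁₀, h₀₀, h₁₁⟩
    exact ⟨by simp [SL2_inv_expl, h₁₀], by simpa [SL2_inv_expl] using h₁₁,
      by simpa [SL2_inv_expl] using h₀₀⟩

variable {f : R →+* S}

lemma mem_upperTriangularKer {A : SL(2, R)} :
    A ∈ upperTriangularKer f ↔ A 1 0 = 0 ∧ f (A 0 0) = 1 ∧ f (A 1 1) = 1 := Iff.rfl

lemma apply_zero_zero_mul_apply_one_one_of_mem_upperTriangularKer {A : SL(2, R)}
    (hA : A ∈ upperTriangularKer f) : A 0 0 * A 1 1 = 1 := by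
  have h := A.det_coe
  rwa [det_fin_two, hA.1, mul_zero, sub_zero] at h

variable (f) in
noncomputable def upperTriangularKerEquiv :
    upperTriangularKer f ≃ (Units.map (f : R →* S)).ker × R where
  toFun A := (⟨Units.mkOfMulEqOne _ _ (apply_zero_zero_mul_apply_one_one_of_mem_upperTriangularKer
    A.2), Units.ext A.2.2.1⟩, A.1 0 1)
  invFun p := ⟨⟨!![(p.1.1 : R), p.2; 0, ↑p.1.1⁻¹], by simp [det_fin_two_of]⟩, by
    have hu : f p.1.1 = 1 := congrArg Units.val p.1.2
    have hu' : f ↑p.1.1⁻¹ = 1 := congrArg Units.val (inv_mem p.1.2)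
    exact ⟨rfl, hu, hu'⟩⟩
  left_inv A := by
    ext i j
    fin_cases i <;> fin_cases j <;> simp [A.2.1, Units.mkOfMulEqOne]
  right_inv p := by
    ext <;> simp [Units.mkOfMulEqOne]

end Matrix.SpecialLinearGroup

namespace ZMod

lemma card_nonunits (n : ℕ) [NeZero n] : Nat.card (nonunits (ZMod n)) = n - n.totient := by
  rw [Nat.card_coe_set_eq, nonunits_eq_compl_range_val, Set.ncard_compl,
    Set.ncard_range_of_injective Units.val_injective, Nat.card_zmod, Nat.card_eq_fintype_card,
    card_units_eq_totient]

lemma isLocalHom_castHom_prime_pow {p k : ℕ} [Fact p.Prime] (hk : k ≠ 0) :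
    IsLocalHom (castHom (dvd_pow_self p hk) (ZMod p)) := by
  refine ⟨fun x hx => ?_⟩
  rw [← natCast_zmod_val x, map_natCast, isUnit_iff_coprime] at hx
  rw [← natCast_zmod_val x, isUnit_iff_coprime]
  exact (Nat.coprime_pow_right_iff (Nat.pos_of_ne_zero hk) _ _).mpr hx

lemma isLocalRing_prime_pow {p k : ℕ} [Fact p.Prime] (hk : k ≠ 0) : IsLocalRing (ZMod (p ^ k)) :=
  have := isLocalHom_castHom_prime_pow (p := p) hk
  (castHom (dvd_pow_self p hk) (ZMod p)).domain_isLocalRing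

lemma card_coprimePairs_prime_pow_succ {p : ℕ} (hp : p.Prime) (k : ℕ) :
    Nat.card (coprimePairs (ZMod (p ^ (k + 1)))) = (p ^ (k + 1)) ^ 2 - (p ^ k) ^ 2 := by
  have := Fact.mk hp
  have := isLocalRing_prime_pow (p := p) k.add_one_ne_zero
  have hnonunits : p ^ (k + 1) - (p ^ (k + 1)).totient = p ^ k := by
    rw [Nat.totient_prime_pow_succ hp]
    refine Nat.sub_eq_of_eq_add ?_
    rw [← mul_one_add, add_comm 1, Nat.sub_add_cancel hp.one_le, pow_succ]
  rw [card_coprimePairs_of_isLocalRing, card_nonunits, hnonunits, Nat.card_zmod]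

theorem card_coprimePairs (n : ℕ) (hn : n ≠ 0) :
    (Nat.card (coprimePairs (ZMod n)) : ℚ) =
      n * n.totient * ∏ p ∈ n.primeFactors, (1 + 1 / (p : ℚ)) := by
  induction n using Nat.recOnPosPrimePosCoprime with
  | zero => exact absurd rfl hn
  | one =>
    simpa using ⟨0, 0, Set.eq_singleton_iff_unique_mem.mpr
      ⟨⟨0, 0, Subsingleton.elim _ _⟩, fun _ _ => Subsingleton.elim _ _⟩⟩
  | prime_pow p k hp hk =>
    obtain ⟨k, rfl⟩ := Nat.exists_eq_add_one_of_ne_zero hk.ne'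
    have hp0 : (p : ℚ) ≠ 0 := Nat.cast_ne_zero.mpr hp.ne_zero
    rw [card_coprimePairs_prime_pow_succ hp, Nat.primeFactors_prime_pow k.add_one_ne_zero hp,
      Finset.prod_singleton, Nat.totient_prime_pow_succ hp,
      Nat.cast_sub (Nat.pow_le_pow_left (Nat.pow_le_pow_right hp.pos (k.le_add_right 1)) 2)]
    push_cast [Nat.cast_sub hp.one_le]
    field_simp
    ring
  | coprime a b _ _ hab iha ihb =>
    rw [card_coprimePairs_congr (chineseRemainder hab), card_coprimePairs_prod,
      Nat.totient_mul hab, Nat.Coprime.primeFactors_mul hab,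
      Finset.prod_union hab.disjoint_primeFactors]
    push_cast [iha (left_ne_zero_of_mul hn), ihb (right_ne_zero_of_mul hn)]
    ring

lemma card_ker_unitsMap_mul_totient {N L : ℕ} [NeZero N] [NeZero L] (hLN : L ∣ N) :
    Nat.card (unitsMap hLN).ker * L.totient = N.totient := by
  rw [← card_units_eq_totient, ← card_units_eq_totient, ← Nat.card_eq_fintype_card,
    ← Nat.card_eq_fintype_card, ← (unitsMap hLN).ker.card_mul_index, Subgroup.index_ker,
    MonoidHom.range_eq_top.mpr (unitsMap_surjective hLN), Subgroup.card_top]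

end ZMod

lemma Int.exists_isCoprime_add_mul {c d n : ℤ} (hc : c ≠ 0)
    (h : ∀ z : ℤ, z ∣ c → z ∣ d → z ∣ n → IsUnit z) : ∃ t, IsCoprime c (d + n * t) := by
  classical
  -- each prime factor of `c` then divides exactly one of `d` and `n * t`
  set t : ℤ := ∏ p ∈ c.natAbs.primeFactors.filter (fun p : ℕ => ¬ (p : ℤ) ∣ d), (p : ℤ)
  refine ⟨t, isCoprime_of_prime_dvd (fun h => hc h.1) fun z hz hzc hzd => ?_⟩
  have hzp : z.natAbs.Prime := Int.prime_iff_natAbs_prime.mp hz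
  by_cases hd : z ∣ d
  · have hzn : ¬ z ∣ n := fun hn => hz.not_isUnit (h z hzc hd hn)
    have hzt : ¬ z ∣ t := by
      rw [Prime.dvd_finsetProd_iff hz]
      rintro ⟨p, hp, hzp'⟩
      rw [Finset.mem_filter] at hp
      have hpz : z.natAbs = p := (Nat.prime_dvd_prime_iff_eq hzp (Nat.prime_of_mem_primeFactors
        hp.1)).mp (Int.natAbs_dvd_natAbs.mpr hzp')
      exact hp.2 (hpz ▸ Int.natAbs_dvd.mpr hd)
    exact (hz.dvd_or_dvd ((dvd_add_right hd).mp hzd)).elim hzn hzt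
  · have hmem : z.natAbs ∈ c.natAbs.primeFactors.filter (fun p : ℕ => ¬ (p : ℤ) ∣ d) := by
      rw [Finset.mem_filter, Nat.mem_primeFactors]
      exact ⟨⟨hzp, Int.natAbs_dvd_natAbs.mpr hzc, Int.natAbs_ne_zero.mpr hc⟩,
        fun h' => hd (Int.natAbs_dvd.mp h')⟩
    have hzt : z ∣ t := (Int.dvd_natAbs.mpr dvd_rfl).trans (Finset.dvd_prod_of_mem _ hmem)
    exact hd ((dvd_add_left (hzt.mul_left n)).mp hzd)

lemma ZMod.exists_isCoprime_intCast_eq {n : ℕ} {x y : ZMod n} (h : IsCoprime x y) :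
    ∃ c d : ℤ, IsCoprime c d ∧ (c : ZMod n) = x ∧ (d : ZMod n) = y := by
  rcases eq_or_ne n 0 with rfl | hn
  · exact ⟨x, y, h, Int.cast_id, Int.cast_id⟩
  have := NeZero.mk hn
  set c : ℤ := x.val + n
  set d : ℤ := (y.val : ℤ)
  have hcx : (c : ZMod n) = x := by simp [c]
  have hdy : (d : ZMod n) = y := by simp [d]
  have hc : c ≠ 0 := by omega
  obtain ⟨u, v, huv⟩ := h
  obtain ⟨u, rfl⟩ := ZMod.intCast_surjective u
  obtain ⟨v, rfl⟩ := ZMod.intCast_surjective v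
  obtain ⟨w, hw⟩ : (n : ℤ) ∣ u * c + v * d - 1 := by
    rw [← ZMod.intCast_zmod_eq_zero_iff_dvd]
    push_cast
    rw [hcx, hdy, huv, sub_self]
  obtain ⟨t, ht⟩ := Int.exists_isCoprime_add_mul hc fun z hzc hzd hzn => isUnit_of_dvd_one <| by
    rw [show (1 : ℤ) = u * c + v * d - n * w by linarith]
    exact dvd_sub (dvd_add (hzc.mul_left u) (hzd.mul_left v)) (hzn.mul_right w)
  exact ⟨c, d + n * t, ht, hcx, by simp [hdy]⟩

theorem SL2_map_intCastRingHom_surjective (n : ℕ) :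
    Function.Surjective (SpecialLinearGroup.map (n := Fin 2) (Int.castRingHom (ZMod n))) := by
  set π := SpecialLinearGroup.map (n := Fin 2) (Int.castRingHom (ZMod n))
  intro M
  obtain ⟨c, d, hcd, hc, hd⟩ := ZMod.exists_isCoprime_intCast_eq (M.isCoprime_row 1)
  obtain ⟨B, hB₀, hB₁⟩ := hcd.exists_SL2_row 1
  obtain ⟨b, hb⟩ := ZMod.intCast_surjective ((M * (π B)⁻¹) 0 1)
  have hπT : π (SpecialLinearGroup.transvection zero_ne_one b) =
      SpecialLinearGroup.transvection zero_ne_one (b : ZMod n) := by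
    ext i j; fin_cases i <;> fin_cases j <;> simp [π, SpecialLinearGroup.transvection_coe]
  refine ⟨SpecialLinearGroup.transvection zero_ne_one b * B, ?_⟩
  rw [map_mul, hπT, hb, ← SpecialLinearGroup.mul_inv_eq_transvection_of_row_one_eq,
    inv_mul_cancel_right] <;> simp [π, hB₀, hB₁, hc, hd]

namespace CongruenceSubgroup

lemma Gamma0_inf_Gamma1_eq_comap {N L : ℕ} (hLN : L ∣ N) :
    Gamma0 N ⊓ Gamma1 L =
      (SpecialLinearGroup.upperTriangularKer (ZMod.castHom hLN (ZMod L))).comap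
        (SpecialLinearGroup.map (Int.castRingHom (ZMod N))) := by
  ext γ
  rw [Subgroup.mem_inf, Subgroup.mem_comap, SpecialLinearGroup.mem_upperTriangularKer,
    Gamma0_mem, Gamma1_mem]
  simp only [SpecialLinearGroup.map_apply_coe, RingHom.mapMatrix_apply, Matrix.map_apply,
    eq_intCast, map_intCast]
  refine ⟨fun ⟨h₁₀, h₀₀, h₁₁, _⟩ => ⟨h₁₀, h₀₀, h₁₁⟩, fun ⟨h₁₀, h₀₀, h₁₁⟩ => ⟨h₁₀, h₀₀, h₁₁, ?_⟩⟩
  rw [ZMod.intCast_zmod_eq_zero_iff_dvd] at h₁₀ ⊢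
  exact (Int.natCast_dvd_natCast.mpr hLN).trans h₁₀

end CongruenceSubgroup

theorem Gamma0_inter_Gamma1_index_general (N L : ℕ) (hN : 0 < N) (hLN : L ∣ N) :
    (((Gamma0 N) ⊓ (Gamma1 L)).index : ℚ) =
      N * Nat.totient L * ∏ p ∈ N.primeFactors, (1 + 1 / (p : ℚ)) := by
  have := NeZero.of_pos hN
  have := NeZero.of_pos (Nat.pos_of_dvd_of_pos hLN hN)
  set H := SpecialLinearGroup.upperTriangularKer (ZMod.castHom hLN (ZMod L))
  have hindex : (Gamma0 N ⊓ Gamma1 L).index = H.index := by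
    rw [Gamma0_inf_Gamma1_eq_comap hLN]
    exact Subgroup.index_comap_of_surjective _ (SL2_map_intCastRingHom_surjective N)
  have hcard : Nat.card (ZMod.unitsMap hLN).ker * N * H.index =
      Nat.card (coprimePairs (ZMod N)) * N := by
    have h := Subgroup.card_mul_index H
    rwa [Nat.card_congr (SpecialLinearGroup.upperTriangularKerEquiv _), Nat.card_prod,
      Nat.card_zmod, SpecialLinearGroup.card_SL2, Nat.card_zmod] at h
  have htotient := ZMod.card_ker_unitsMap_mul_totient hLN
  have hker : Nat.card (ZMod.unitsMap hLN).ker ≠ 0 := Nat.card_pos.ne'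
  qify at hcard htotient hker
  rw [ZMod.card_coprimePairs N hN.ne', ← htotient] at hcard
  rw [hindex]
  apply mul_left_cancel₀ (mul_ne_zero hker (Nat.cast_ne_zero.mpr hN.ne'))
  linear_combination hcard

theorem Gamma0_inter_Gamma1_index (N L : ℕ) (hN : 0 < N) (hL : 0 < L) (hLN : L ∣ N) :
    (((Gamma0 N) ⊓ (Gamma1 L)).index : ℚ) =
      N * Nat.totient L * ∏ p ∈ N.primeFactors, (1 + 1 / (p : ℚ)) :=
  Gamma0_inter_Gamma1_index_general N L hN hLN
end

section
/- For every positive integer N and nonnegative integer k, Σ_{n=1}^∞ n^k e^{-2πn/N} ≤ (k! / (δ_N π)^{k+1}) · N^{k+1}, where δ_N = 1 if N ≥ 4, δ_N = 1/2 if N ∈ {2,3}, and δ_N = 1/4 if N = 1. -/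
/-!
Write `a = 2π/N` and `b = δ_N π/N`, so that `2b ≤ a` because `δ_N ≤ 1`. Comparing with one term of
the exponential series gives `x^k ≤ k!/b^k · e^{bx}`, hence each term of the sum is at most
`k!/b^k · e^{-(a-b)n}`. Summing the geometric series gives `k!/b^k · 1/(e^{a-b} - 1)`, and
`e^{a-b} - 1 ≥ a - b ≥ b`.
-/

open Real
open scoped Nat

lemma pow_le_factorial_div_pow_mul_exp {b x : ℝ} (hb : 0 < b) (hx : 0 ≤ x) (k : ℕ) :
    x ^ k ≤ k ! / b ^ k * exp (b * x) := by
  have h := pow_div_factorial_le_exp (b * x) (mul_nonneg hb.le hx) k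
  rw [div_le_iff₀ (by positivity), mul_pow] at h
  rw [div_mul_eq_mul_div, le_div_iff₀ (by positivity)]
  linarith

lemma hasSum_exp_neg_mul_succ {c : ℝ} (hc : 0 < c) :
    HasSum (fun n : ℕ ↦ exp (-(c * (n + 1)))) (exp c - 1)⁻¹ := by
  have hr : exp (-c) < 1 := exp_lt_one_iff.mpr (neg_lt_zero.mpr hc)
  have h := (hasSum_geometric_of_lt_one (exp_pos _).le hr).mul_left (exp (-c))
  have hterm (n : ℕ) : exp (-(c * (n + 1))) = exp (-c) * exp (-c) ^ n := by
    rw [← pow_succ', ← exp_nat_mul]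
    push_cast
    ring_nf
  have hsum : exp (-c) * (1 - exp (-c))⁻¹ = (exp c - 1)⁻¹ := by
    have := (exp_pos c).ne'
    rw [exp_neg]
    field_simp
  simpa only [hterm, hsum] using h

lemma tsum_succ_pow_mul_exp_neg_le {a b : ℝ} (hb : 0 < b) (hab : 2 * b ≤ a) (k : ℕ) :
    ∑' n : ℕ, ((n + 1 : ℝ)) ^ k * exp (-(a * (n + 1))) ≤ k ! / b ^ (k + 1) := by
  have hc : 0 < a - b := by linarith
  have hg := (hasSum_exp_neg_mul_succ hc).mul_left (k ! / b ^ k)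
  have hterm (n : ℕ) : ((n + 1 : ℝ)) ^ k * exp (-(a * (n + 1))) ≤
      k ! / b ^ k * exp (-((a - b) * (n + 1))) := by
    calc ((n + 1 : ℝ)) ^ k * exp (-(a * (n + 1)))
        ≤ k ! / b ^ k * exp (b * (n + 1)) * exp (-(a * (n + 1))) := by
          gcongr
          exact pow_le_factorial_div_pow_mul_exp hb (by positivity) k
      _ = k ! / b ^ k * exp (-((a - b) * (n + 1))) := by
          rw [mul_assoc, ← exp_add]
          ring_nf
  have hf : Summable fun n : ℕ ↦ ((n + 1 : ℝ)) ^ k * exp (-(a * (n + 1))) :=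
    hg.summable.of_nonneg_of_le (fun n ↦ by positivity) hterm
  calc ∑' n : ℕ, ((n + 1 : ℝ)) ^ k * exp (-(a * (n + 1)))
      ≤ k ! / b ^ k * (exp (a - b) - 1)⁻¹ := hasSum_le hterm hf.hasSum hg
    _ ≤ k ! / b ^ k * b⁻¹ := by
        gcongr
        linarith [add_one_le_exp (a - b)]
    _ = k ! / b ^ (k + 1) := by
        rw [pow_succ, ← div_div, div_eq_mul_inv (_ / _)]

theorem exp_sum_bound_delta (N : ℕ) (hN : 0 < N) (k : ℕ) :
    ∑' n : ℕ, ((n + 1 : ℝ)) ^ k * Real.exp (-2 * π * (n + 1) / N) ≤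
      (k.factorial : ℝ) /
        ((if 4 ≤ N then (1 : ℝ) else if N = 1 then 1 / 4 else 1 / 2) * π) ^ (k + 1) *
        (N : ℝ) ^ (k + 1) := by
  set δ : ℝ := if 4 ≤ N then (1 : ℝ) else if N = 1 then 1 / 4 else 1 / 2
  have hδ_pos : 0 < δ := by unfold δ; split_ifs <;> norm_num
  have hδ_le : δ ≤ 1 := by unfold δ; split_ifs <;> norm_num
  have hN' : (0 : ℝ) < N := by exact_mod_cast hN
  have hab : 2 * (δ * π / N) ≤ 2 * π / N := by
    rw [mul_div_assoc']
    gcongr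
    exact mul_le_of_le_one_left pi_pos.le hδ_le
  have h := tsum_succ_pow_mul_exp_neg_le (by positivity) hab k
  rw [div_pow, div_div_eq_mul_div] at h
  rw [div_mul_eq_mul_div]
  convert h using 5 with n
  ring
end

section
/- The equation 9 = p_7(x_1) + p_7(x_2) + 3·p_7(x_3) + 3·p_7(x_4) has no solutions with x_1, x_2, x_3, x_4 ∈ ℤ, where p_7(x) = (5x^2 - 3x)/2 is the x-th generalized heptagonal number. -/
/-- The x-th generalized heptagonal number. -/
def hept (x : ℤ) : ℤ := (5 * x ^ 2 - 3 * x) / 2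

lemma hept_two_mul (x : ℤ) : 2 * hept x = 5 * x ^ 2 - 3 * x := by
  unfold hept
  rcases Int.even_or_odd x with ⟨k, hk⟩ | ⟨k, hk⟩ <;> subst hk
  · rw [show 5 * (k + k) ^ 2 - 3 * (k + k) = 2 * (10 * k ^ 2 - 3 * k) by ring,
      Int.mul_ediv_cancel_left _ two_ne_zero]
  · rw [show 5 * (2 * k + 1) ^ 2 - 3 * (2 * k + 1) = 2 * (10 * k ^ 2 + 7 * k + 1) by ring,
      Int.mul_ediv_cancel_left _ two_ne_zero]

lemma hept_nonneg (x : ℤ) : 0 ≤ hept x := by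
  have h := hept_two_mul x
  rcases le_or_gt x 0 with hx | hx <;> nlinarith

lemma hept_bound (x : ℤ) (h : hept x ≤ 9) : -2 ≤ x ∧ x ≤ 2 := by
  have h2 := hept_two_mul x
  constructor <;> nlinarith

theorem nine_not_rep_1133 :
    ¬ ∃ x₁ x₂ x₃ x₄ : ℤ, (9 : ℤ) = hept x₁ + hept x₂ + 3 * hept x₃ + 3 * hept x₄ := by
  rintro ⟨a, b, c, d, h⟩
  have ha := hept_two_mul a
  have hb := hept_two_mul b
  have hc := hept_two_mul c
  have hd := hept_two_mul d
  have na := hept_nonneg a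
  have nb := hept_nonneg b
  have nc := hept_nonneg c
  have nd := hept_nonneg d
  obtain ⟨ba1, ba2⟩ := hept_bound a (by omega)
  obtain ⟨bb1, bb2⟩ := hept_bound b (by omega)
  obtain ⟨bc1, bc2⟩ := hept_bound c (by omega)
  obtain ⟨bd1, bd2⟩ := hept_bound d (by omega)
  interval_cases a <;> interval_cases b <;> interval_cases c <;> interval_cases d <;> omega
end
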